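/- Let (X, Π) be a weighted pure d-dimensional simplicial complex. For every 0 ≤ k ≤ d−1 and every −1 ≤ r ≤ k, the up-down walk P∧_k has at most |X(r)| eigenvalues (counted with multiplicity) whose value is strictly greater than 1 − (1/(k+2)) · ∏_{j=r}^{k−1} (1 − γ_j). -/

import Mathlib

open Finset

/-- A weighted pure `d`-dimensional simplicial complex on a finite ground set `V`.
Faces are finsets; a face of cardinality `m` has dimension `m - 1` (so `X(j)` is the
set of faces of cardinality `j + 1`).  The family of faces is downward closed, every
face is contained in a face of cardinality `d + 1` (purity), and a probability
distribution `Π = Π_d` (positive weights summing to `1`) is given on the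
top-dimensional faces. -/
structure WSC (V : Type*) [DecidableEq V] [Fintype V] (d : ℕ) where
  faces : Finset (Finset V)
  empty_mem : ∅ ∈ faces
  down_closed : ∀ β ∈ faces, ∀ α ⊆ β, α ∈ faces
  pure : ∀ α ∈ faces, ∃ β ∈ faces, α ⊆ β ∧ β.card = d + 1
  dim_le : ∀ α ∈ faces, α.card ≤ d + 1
  weight : Finset V → ℝ
  weight_pos : ∀ β ∈ faces, β.card = d + 1 → 0 < weight β
  weight_zero : ∀ β : Finset V, β ∉ faces ∨ β.card ≠ d + 1 → weight β = 0
  weight_sum : ∑ β ∈ faces.filter (fun β => β.card = d + 1), weight β = 1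

namespace WSC

variable {V : Type*} [DecidableEq V] [Fintype V] {d : ℕ}

/-- Auxiliary recursion for the marginal distributions: `Waux X t` is the marginal
distribution `Π_{d - t}` on faces of cardinality `d + 1 - t`, defined by
`Π_j(α) = (1/(j+2)) ∑_{β ∈ X(j+1), β ⊇ α} Π_{j+1}(β)`. -/
noncomputable def Waux (X : WSC V d) : ℕ → Finset V → ℝ
  | 0 => X.weight
  | (t + 1) => fun α =>
      (1 / ((d + 1 - t : ℕ) : ℝ)) *
        ∑ β ∈ X.faces.filter (fun β => α ⊆ β ∧ β.card = d + 1 - t), X.Waux t β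

/-- `X.W m α` is the marginal probability `Π_{m-1}(α)` of the face `α` of cardinality
`m` (dimension `m - 1`). -/
noncomputable def W (X : WSC V d) (m : ℕ) : Finset V → ℝ := X.Waux (d + 1 - m)

/-- The inner product `⟨f, g⟩_{Π_{m-1}}` on `ℝ^{X(m-1)}` (faces of cardinality `m`). -/
noncomputable def inn (X : WSC V d) (m : ℕ) (f g : Finset V → ℝ) : ℝ :=
  ∑ α ∈ X.faces.filter (fun α => α.card = m), X.W m α * f α * g α

/-- The up operator `U_j`: `(U_j f)(β) = (1/(j+2)) ∑_{x ∈ β} f(β \ {x})`, for `β` of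
cardinality `j + 2`.  (The formula is uniform in the cardinality of `β`.) -/
noncomputable def upOp (f : Finset V → ℝ) : Finset V → ℝ :=
  fun β => (1 / (β.card : ℝ)) * ∑ x ∈ β, f (β.erase x)

/-- The down operator `D_{j+1}`:
`(D_{j+1} g)(α) = ∑_{β ∈ X(j+1), β ⊇ α} Π_{j+1}(β) g(β) / ((j+2) Π_j(α))`, for `α` of
cardinality `j + 1`.  (The formula is uniform in the cardinality of `α`.) -/
noncomputable def downOp (X : WSC V d) (g : Finset V → ℝ) : Finset V → ℝ :=
  fun α => ∑ β ∈ X.faces.filter (fun β => α ⊆ β ∧ β.card = α.card + 1),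
      (X.W (α.card + 1) β * g β) / (((α.card : ℝ) + 1) * X.W α.card α)

/-- The down-up walk `P∨_k = U_{k-1} D_k`, acting on functions on `X(k)` (faces of
cardinality `k + 1`). -/
noncomputable def downUp (X : WSC V d) (f : Finset V → ℝ) : Finset V → ℝ :=
  upOp (X.downOp f)

/-- The up-down walk `P∧_k = D_{k+1} U_k`, acting on functions on `X(k)` (faces of
cardinality `k + 1`). -/
noncomputable def upDown (X : WSC V d) (f : Finset V → ℝ) : Finset V → ℝ :=
  X.downOp (upOp f)

/-- The `k`-th non-lazy up-down walk `N_k = ((k+2)/(k+1)) (P∧_k - (1/(k+2)) I)`. -/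
noncomputable def nonLazy (X : WSC V d) (k : ℕ) (f : Finset V → ℝ) : Finset V → ℝ :=
  fun α => (((k : ℝ) + 2) / ((k : ℝ) + 1)) * (X.upDown f α - (1 / ((k : ℝ) + 2)) * f α)

/-- The up-down walk `U_{a,b} = D_{a+1} ⋯ D_b · U_{b-1} ⋯ U_a` on `X(a)` through
`X(b)`, where `t = b - a`. -/
noncomputable def upDownAB (X : WSC V d) (t : ℕ) (f : Finset V → ℝ) : Finset V → ℝ :=
  (X.downOp)^[t] (upOp^[t] f)

/-- The second largest eigenvalue of a row-stochastic operator `M` on `ℝ^{X(m-1)}`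
(faces of cardinality `m`) which is self-adjoint with respect to `⟨·,·⟩_{Π_{m-1}}`
and has stationary distribution `Π_{m-1}`: by the variational principle it is the
supremum of the Rayleigh quotients of (nonzero) functions orthogonal to the
constant function `1`. -/
noncomputable def lam2 (X : WSC V d) (m : ℕ) (M : (Finset V → ℝ) → Finset V → ℝ) : ℝ :=
  sSup { r : ℝ | ∃ f : Finset V → ℝ,
    X.inn m f (fun _ => 1) = 0 ∧ X.inn m f f ≠ 0 ∧
    r = X.inn m f (M f) / X.inn m f f }

/-- The vertices of the link `X_α`: those `x ∉ α` with `α ∪ {x} ∈ X`. -/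
def linkVerts (X : WSC V d) (α : Finset V) : Finset V :=
  Finset.univ.filter (fun x => x ∉ α ∧ insert x α ∈ X.faces)

/-- The link distribution `Π^α_l(τ) = Π_{j+1+l}(α ∪ τ) / (C(|α ∪ τ|, |α|) · Π_j(α))`
for a face `α` of dimension `j` and `τ ∈ X_α(l)`. -/
noncomputable def linkPi (X : WSC V d) (α τ : Finset V) : ℝ :=
  X.W (α ∪ τ).card (α ∪ τ) / ((Nat.choose (α ∪ τ).card α.card : ℝ) * X.W α.card α)

/-- The random walk matrix `M_α` of the graph of the link `X_α`, with entries
`M_α(x, y) = Π^α_1({x, y}) / (2 Π^α_0(x))` for `{x, y} ∈ X_α(1)` and `0` otherwise,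
viewed as an operator on functions on the vertices of the link. -/
noncomputable def linkWalk (X : WSC V d) (α : Finset V) (f : V → ℝ) : V → ℝ :=
  fun x => ∑ y ∈ (X.linkVerts α).filter
      (fun y => y ≠ x ∧ insert y (insert x α) ∈ X.faces),
    (X.linkPi α {x, y} / (2 * X.linkPi α {x})) * f y

/-- The projector `J_α` onto the constant functions on the link: `J_α g` is the
constant function with value `E_{x ∼ Π^α_0}[g(x)]`. -/
noncomputable def linkJ (X : WSC V d) (α : Finset V) (g : V → ℝ) : V → ℝ :=
  fun _ => ∑ x ∈ X.linkVerts α, X.linkPi α {x} * g x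

/-- The inner product `⟨g, h⟩_{Π^α_0}` on functions on the vertices of the link. -/
noncomputable def linkInner (X : WSC V d) (α : Finset V) (g h : V → ℝ) : ℝ :=
  ∑ x ∈ X.linkVerts α, X.linkPi α {x} * g x * h x

/-- The second largest eigenvalue `λ₂(M_α)` of the random walk matrix of the graph
of the link `X_α`, via the variational principle. -/
noncomputable def linkLam2 (X : WSC V d) (α : Finset V) : ℝ :=
  sSup { r : ℝ | ∃ f : V → ℝ,
    X.linkInner α f (fun _ => 1) = 0 ∧ X.linkInner α f f ≠ 0 ∧
    r = X.linkInner α f (X.linkWalk α f) / X.linkInner α f f }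

/-- `X.gammaC m` is `γ_{m-1} = max_{α ∈ X(m-1)} λ₂(M_α)`, the maximum over faces `α`
of cardinality `m` (dimension `m - 1`) of the second eigenvalue of the link walk. -/
noncomputable def gammaC (X : WSC V d) (m : ℕ) : ℝ :=
  sSup { r : ℝ | ∃ α ∈ X.faces, α.card = m ∧ r = X.linkLam2 α }

end WSC

/-!
Garland's method bounds the up operator. Expanding `‖U f‖²` over the links of the faces one
dimension below `f`, and bounding each link term by `⟨g, M_α g⟩ ≤ γ ‖g‖² + (1 - γ) (E g)²`
(split `g` into its mean and a part orthogonal to the constants), bounds `‖U f‖²` by a convex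
combination of `‖f‖²` and `‖D f‖²`. If `f` lives on `X(s-1)` and `D^{s-q} f` vanishes on
`X(q-1)`, induction on `s`, with `‖D f‖² = ⟨U D f, f⟩ ≤ ‖U D f‖ ‖f‖`, gives `‖U f‖² ≤ θ ‖f‖²` for
`θ = 1 - (1/(s+1)) ∏_{q-1 ≤ j < s-1} (1 - γ_j)`. The induction needs `θ ≥ 0`, which follows from
`γ_j ≥ -1/(d-j-1)`, witnessed by a test function concentrated at one vertex of a link.

Since `⟨f, P∧ f⟩ = ‖U f‖²`, it remains to find a nonzero combination `g` of the `|X(r-1)| + 1`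
orthogonal eigenfunctions with `D^{k+1-r} g = 0` on `X(r-1)`; it exists by counting dimensions,
and its Rayleigh quotient is at most `θ`, so some eigenvalue is at most `θ`.
-/

namespace WSC

variable {V : Type*} [DecidableEq V] [Fintype V] {d : ℕ} (X : WSC V d)

theorem sum_W_cofaces {s : ℕ} (hs : s ≤ d) (α : Finset V) :
    ∑ β ∈ X.faces.filter (fun β => α ⊆ β ∧ β.card = s + 1), X.W (s + 1) β
      = ((s : ℝ) + 1) * X.W s α := by
  have hW : X.W s α = X.Waux (d - s + 1) α := by rw [W, show d + 1 - s = d - s + 1 by omega]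
  rw [hW, W, show d + 1 - (s + 1) = d - s by omega, Waux, show d + 1 - (d - s) = s + 1 by omega]
  push_cast
  field_simp

theorem W_pos {α : Finset V} (hα : α ∈ X.faces) {m : ℕ} (hc : α.card = m) : 0 < X.W m α := by
  suffices ∀ t ≤ d + 1, ∀ α ∈ X.faces, α.card = d + 1 - t → 0 < X.Waux t α by
    exact this (d + 1 - m) (by omega) α hα (by have := X.dim_le α hα; omega)
  intro t
  induction t with
  | zero => exact fun _ α hα hc => X.weight_pos α hα (by simpa using hc)
  | succ t ih =>
    intro ht α hα hc
    obtain ⟨T, hT, hαT, hTc⟩ := X.pure α hα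
    obtain ⟨β, hαβ, hβT, hβc⟩ :=
      Finset.exists_subsuperset_card_eq hαT (n := α.card + 1) (by omega) (by omega)
    have hβ : β ∈ X.faces.filter (fun β => α ⊆ β ∧ β.card = d + 1 - t) :=
      Finset.mem_filter.2 ⟨X.down_closed T hT β hβT, hαβ, by omega⟩
    have hpos : (0 : ℝ) < ((d + 1 - t : ℕ) : ℝ) := by exact_mod_cast (show 0 < d + 1 - t by omega)
    refine mul_pos (by positivity) (Finset.sum_pos (fun γ hγ => ?_) ⟨β, hβ⟩)
    obtain ⟨hγ, -, hγc⟩ := Finset.mem_filter.1 hγ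
    exact ih (by omega) γ hγ hγc

theorem inn_comm (m : ℕ) (f g : Finset V → ℝ) : X.inn m f g = X.inn m g f := by
  simp only [inn, mul_right_comm]

theorem inn_self_nonneg (m : ℕ) (f : Finset V → ℝ) : 0 ≤ X.inn m f f := by
  refine Finset.sum_nonneg fun α hα => ?_
  obtain ⟨hα, hc⟩ := Finset.mem_filter.1 hα
  rw [mul_assoc]
  exact mul_nonneg (X.W_pos hα hc).le (mul_self_nonneg _)

theorem inn_sq_le (m : ℕ) (f g : Finset V → ℝ) :
    X.inn m f g ^ 2 ≤ X.inn m f f * X.inn m g g := by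
  refine Finset.sum_sq_le_sum_mul_sum_of_sq_le_mul _ (fun α hα => ?_) (fun α hα => ?_)
    (fun α _ => le_of_eq (by ring))
  all_goals
    obtain ⟨hα, hc⟩ := Finset.mem_filter.1 hα
    rw [mul_assoc]
    exact mul_nonneg (X.W_pos hα hc).le (mul_self_nonneg _)

theorem inn_eq_zero_of_left {m : ℕ} {f : Finset V → ℝ}
    (hf : ∀ α ∈ X.faces, α.card = m → f α = 0) (g : Finset V → ℝ) : X.inn m f g = 0 :=
  Finset.sum_eq_zero fun α hα => by
    obtain ⟨hα, hc⟩ := Finset.mem_filter.1 hα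
    rw [hf α hα hc, mul_zero, zero_mul]

theorem inn_congr_right {m : ℕ} (f : Finset V → ℝ) {g h : Finset V → ℝ}
    (hgh : ∀ α ∈ X.faces, α.card = m → g α = h α) : X.inn m f g = X.inn m f h :=
  Finset.sum_congr rfl fun α hα => by
    obtain ⟨hα, hc⟩ := Finset.mem_filter.1 hα
    rw [hgh α hα hc]

theorem inn_sum_smul_left {ι : Type*} (m : ℕ) (s : Finset ι) (c : ι → ℝ)
    (f : ι → Finset V → ℝ) (g : Finset V → ℝ) :
    X.inn m (∑ i ∈ s, c i • f i) g = ∑ i ∈ s, c i * X.inn m (f i) g := by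
  simp only [inn, Finset.sum_apply, Pi.smul_apply, smul_eq_mul, Finset.mul_sum, Finset.sum_mul]
  rw [Finset.sum_comm]
  exact Finset.sum_congr rfl fun _ _ => Finset.sum_congr rfl fun _ _ => by ring

@[simp]
theorem mem_linkVerts {α : Finset V} {x : V} :
    x ∈ X.linkVerts α ↔ x ∉ α ∧ insert x α ∈ X.faces := by
  simp [linkVerts]

theorem sum_linkVerts_insert (α : Finset V) (G : Finset V → ℝ) :
    ∑ x ∈ X.linkVerts α, G (insert x α)
      = ∑ β ∈ X.faces.filter (fun b => α ⊆ b ∧ b.card = α.card + 1), G β := by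
  have himage : X.faces.filter (fun b => α ⊆ b ∧ b.card = α.card + 1)
      = (X.linkVerts α).image (insert · α) := by
    ext β
    simp only [Finset.mem_filter, Finset.mem_image, mem_linkVerts]
    constructor
    · rintro ⟨hβ, hαβ, hc⟩
      obtain ⟨x, hxβ, hxα⟩ := Finset.exists_of_ssubset
        (Finset.ssubset_iff_subset_ne.2 ⟨hαβ, by rintro rfl; omega⟩)
      have hxαβ : insert x α = β := Finset.eq_of_subset_of_card_le
        (Finset.insert_subset hxβ hαβ) (by rw [Finset.card_insert_of_notMem hxα]; omega)
      exact ⟨x, ⟨hxα, hxαβ ▸ hβ⟩, hxαβ⟩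
    · rintro ⟨x, ⟨hxα, hx⟩, rfl⟩
      exact ⟨hx, Finset.subset_insert _ _, Finset.card_insert_of_notMem hxα⟩
  rw [himage, Finset.sum_image fun x hx y _ h => (Finset.insert_inj (X.mem_linkVerts.1 hx).1).1 h]

theorem sum_faces_sum_linkVerts (m : ℕ) (H : Finset V → V → ℝ) :
    ∑ α ∈ X.faces.filter (fun a => a.card = m), ∑ x ∈ X.linkVerts α, H (insert x α) x
      = ∑ a ∈ X.faces.filter (fun a => a.card = m + 1), ∑ x ∈ a, H a x := by
  rw [Finset.sum_sigma', Finset.sum_sigma']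
  refine Finset.sum_nbij' (fun p => ⟨insert p.2 p.1, p.2⟩) (fun p => ⟨p.1.erase p.2, p.2⟩)
    ?_ ?_ ?_ ?_ (fun _ _ => rfl)
  · rintro ⟨α, x⟩ h
    simp only [Finset.mem_sigma, Finset.mem_filter, mem_linkVerts] at h ⊢
    exact ⟨⟨h.2.2, by rw [Finset.card_insert_of_notMem h.2.1, h.1.2]⟩, Finset.mem_insert_self _ _⟩
  · rintro ⟨a, x⟩ h
    simp only [Finset.mem_sigma, Finset.mem_filter, mem_linkVerts] at h ⊢
    refine ⟨⟨X.down_closed a h.1.1 _ (Finset.erase_subset _ _), ?_⟩,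
      Finset.notMem_erase _ _, by rw [Finset.insert_erase h.2]; exact h.1.1⟩
    rw [Finset.card_erase_of_mem h.2, h.1.2, Nat.add_sub_cancel]
  · rintro ⟨α, x⟩ h
    simp only [Finset.mem_sigma, Finset.mem_filter, mem_linkVerts] at h
    simp [Finset.erase_insert h.2.1]
  · rintro ⟨a, x⟩ h
    simp only [Finset.mem_sigma, Finset.mem_filter] at h
    simp [Finset.insert_erase h.2]

theorem filter_linkVerts_eq_linkVerts_insert (α : Finset V) (x : V) :
    (X.linkVerts α).filter (fun y => y ≠ x ∧ insert y (insert x α) ∈ X.faces)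
      = X.linkVerts (insert x α) := by
  ext y
  simp only [Finset.mem_filter, mem_linkVerts, Finset.mem_insert, not_or]
  refine ⟨fun ⟨⟨hyα, _⟩, hyx, h⟩ => ⟨⟨hyx, hyα⟩, h⟩, fun ⟨⟨hyx, hyα⟩, h⟩ =>
    ⟨⟨hyα, X.down_closed _ h _ (Finset.insert_subset_insert _ (Finset.subset_insert _ _))⟩,
      hyx, h⟩⟩

theorem mem_linkVerts_insert_comm {α : Finset V} {x y : V} :
    x ∈ X.linkVerts α ∧ y ∈ X.linkVerts (insert x α)
      ↔ y ∈ X.linkVerts α ∧ x ∈ X.linkVerts (insert y α) := by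
  suffices ∀ x y, x ∈ X.linkVerts α ∧ y ∈ X.linkVerts (insert x α) →
      y ∈ X.linkVerts α ∧ x ∈ X.linkVerts (insert y α) from ⟨this x y, this y x⟩
  intro x y
  simp only [mem_linkVerts, Finset.mem_insert, not_or]
  rintro ⟨⟨hxα, -⟩, ⟨hyx, hyα⟩, h⟩
  rw [Finset.insert_comm] at h
  exact ⟨⟨hyα, X.down_closed _ h _ (Finset.subset_insert _ _)⟩, ⟨Ne.symm hyx, hxα⟩, h⟩

theorem sum_linkEdges_comm (α : Finset V) (T : V → V → ℝ) :
    ∑ x ∈ X.linkVerts α, ∑ y ∈ X.linkVerts (insert x α), T x y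
      = ∑ x ∈ X.linkVerts α, ∑ y ∈ X.linkVerts (insert x α), T y x :=
  Finset.sum_comm' fun _ _ => X.mem_linkVerts_insert_comm.trans and_comm

/-- `E_{x ∼ Π^α_0}[g(x)]`. -/
noncomputable def linkMean (α : Finset V) (g : V → ℝ) : ℝ :=
  ∑ x ∈ X.linkVerts α, X.linkPi α {x} * g x

theorem linkPi_singleton {α : Finset V} {x : V} (hx : x ∉ α) {m : ℕ} (hc : α.card = m) :
    X.linkPi α {x} = X.W (m + 1) (insert x α) / (((m : ℝ) + 1) * X.W m α) := by
  rw [linkPi, Finset.union_singleton, Finset.card_insert_of_notMem hx, hc,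
    Nat.choose_succ_self_right]
  push_cast
  rfl

theorem linkPi_pair {α : Finset V} {x y : V} (hx : x ∉ α) (hy : y ∉ insert x α) {m : ℕ}
    (hc : α.card = m) :
    X.linkPi α {x, y} / 2
      = X.W (m + 2) (insert y (insert x α)) / ((((m : ℝ) + 2) * ((m : ℝ) + 1)) * X.W m α) := by
  have hxy : α ∪ {x, y} = insert y (insert x α) := by
    ext; simp only [Finset.mem_union, Finset.mem_insert, Finset.mem_singleton]; tauto
  have hchoose : ((m + 2).choose m : ℝ) = ((m : ℝ) + 2) * ((m : ℝ) + 1) / 2 := by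
    rw [Nat.choose_symm_add, Nat.cast_choose_two]
    push_cast
    ring
  rw [linkPi, hxy, Finset.card_insert_of_notMem hy, Finset.card_insert_of_notMem hx, hc, hchoose,
    div_div]
  ring_nf

theorem linkPi_singleton_pos {α : Finset V} (hα : α ∈ X.faces) {x : V}
    (hx : x ∈ X.linkVerts α) : 0 < X.linkPi α {x} := by
  rw [mem_linkVerts] at hx
  rw [X.linkPi_singleton hx.1 rfl]
  have := X.W_pos hx.2 (Finset.card_insert_of_notMem hx.1)
  have := X.W_pos hα rfl
  positivity

theorem linkPi_pair_pos {α : Finset V} (hα : α ∈ X.faces) {x y : V} (hx : x ∈ X.linkVerts α)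
    (hy : y ∈ X.linkVerts (insert x α)) : 0 < X.linkPi α {x, y} := by
  rw [mem_linkVerts] at hx hy
  suffices 0 < X.linkPi α {x, y} / 2 by linarith
  rw [X.linkPi_pair hx.1 hy.1 rfl]
  have := X.W_pos hy.2 (by rw [Finset.card_insert_of_notMem hy.1,
    Finset.card_insert_of_notMem hx.1])
  have := X.W_pos hα rfl
  positivity

theorem sum_linkPi_singleton {α : Finset V} (hα : α ∈ X.faces) {m : ℕ} (hc : α.card = m)
    (hm : m ≤ d) : ∑ x ∈ X.linkVerts α, X.linkPi α {x} = 1 := by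
  rw [Finset.sum_congr rfl fun x hx => X.linkPi_singleton (X.mem_linkVerts.1 hx).1 hc,
    X.sum_linkVerts_insert α (fun β => X.W (m + 1) β / (((m : ℝ) + 1) * X.W m α)), hc,
    ← Finset.sum_div, X.sum_W_cofaces hm α]
  have := X.W_pos hα hc
  field_simp

theorem sum_linkPi_pair {α : Finset V} (hα : α ∈ X.faces) {m : ℕ} (hc : α.card = m)
    (hmd : m + 1 ≤ d) {x : V} (hx : x ∈ X.linkVerts α) :
    ∑ y ∈ X.linkVerts (insert x α), X.linkPi α {x, y} / 2 = X.linkPi α {x} := by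
  rw [mem_linkVerts] at hx
  have hcx : (insert x α).card = m + 1 := by rw [Finset.card_insert_of_notMem hx.1, hc]
  rw [Finset.sum_congr rfl fun y hy => X.linkPi_pair hx.1 (X.mem_linkVerts.1 hy).1 hc,
    X.sum_linkVerts_insert (insert x α)
      (fun β => X.W (m + 2) β / ((((m : ℝ) + 2) * ((m : ℝ) + 1)) * X.W m α)), hcx,
    ← Finset.sum_div, X.sum_W_cofaces hmd, X.linkPi_singleton hx.1 hc]
  have := X.W_pos hα hc
  push_cast
  field_simp
  ring

theorem linkWalk_eq (α : Finset V) (g : V → ℝ) (x : V) :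
    X.linkWalk α g x
      = ∑ y ∈ X.linkVerts (insert x α), X.linkPi α {x, y} / (2 * X.linkPi α {x}) * g y := by
  rw [linkWalk, filter_linkVerts_eq_linkVerts_insert]

theorem linkWalk_add_const {α : Finset V} (hα : α ∈ X.faces) {m : ℕ} (hc : α.card = m)
    (hmd : m + 1 ≤ d) (g : V → ℝ) (c : ℝ) {x : V} (hx : x ∈ X.linkVerts α) :
    X.linkWalk α (fun z => g z + c) x = X.linkWalk α g x + c := by
  have hrow : ∑ y ∈ X.linkVerts (insert x α), X.linkPi α {x, y} / (2 * X.linkPi α {x}) = 1 := by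
    simp only [← div_div, ← Finset.sum_div, X.sum_linkPi_pair hα hc hmd hx]
    exact div_self (X.linkPi_singleton_pos hα hx).ne'
  simp only [linkWalk_eq, mul_add, Finset.sum_add_distrib, ← Finset.sum_mul, hrow, one_mul]

theorem linkWalk_const {α : Finset V} (hα : α ∈ X.faces) {m : ℕ} (hc : α.card = m)
    (hmd : m + 1 ≤ d) (c : ℝ) {x : V} (hx : x ∈ X.linkVerts α) :
    X.linkWalk α (fun _ => c) x = c := by
  simpa [linkWalk_eq] using X.linkWalk_add_const hα hc hmd (fun _ => 0) c hx

theorem linkInner_linkWalk_eq_sum {α : Finset V} (hα : α ∈ X.faces) (a b : V → ℝ) :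
    X.linkInner α a (X.linkWalk α b)
      = ∑ x ∈ X.linkVerts α, ∑ y ∈ X.linkVerts (insert x α),
          X.linkPi α {x, y} / 2 * a x * b y := by
  refine Finset.sum_congr rfl fun x hx => ?_
  have := (X.linkPi_singleton_pos hα hx).ne'
  rw [linkWalk_eq, Finset.mul_sum]
  refine Finset.sum_congr rfl fun y _ => ?_
  field_simp

theorem linkInner_linkWalk_comm {α : Finset V} (hα : α ∈ X.faces) (a b : V → ℝ) :
    X.linkInner α a (X.linkWalk α b) = X.linkInner α b (X.linkWalk α a) := by
  rw [X.linkInner_linkWalk_eq_sum hα, X.linkInner_linkWalk_eq_sum hα, X.sum_linkEdges_comm]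
  simp only [Finset.pair_comm, mul_right_comm]

theorem linkInner_self_nonneg {α : Finset V} (hα : α ∈ X.faces) (g : V → ℝ) :
    0 ≤ X.linkInner α g g :=
  Finset.sum_nonneg fun x hx => by
    rw [mul_assoc]
    exact mul_nonneg (X.linkPi_singleton_pos hα hx).le (mul_self_nonneg _)

theorem linkInner_linkWalk_self_le {α : Finset V} (hα : α ∈ X.faces) {m : ℕ}
    (hc : α.card = m) (hmd : m + 1 ≤ d) (g : V → ℝ) :
    X.linkInner α g (X.linkWalk α g) ≤ X.linkInner α g g := by
  have hdiag : X.linkInner α g g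
      = ∑ x ∈ X.linkVerts α, ∑ y ∈ X.linkVerts (insert x α), X.linkPi α {x, y} / 2 * g x ^ 2 :=
    Finset.sum_congr rfl fun x hx => by
      rw [← Finset.sum_mul, X.sum_linkPi_pair hα hc hmd hx]
      ring
  have hswap := (X.sum_linkEdges_comm α fun x y => X.linkPi α {x, y} / 2 * g x ^ 2).symm
  have hamgm : 2 * ∑ x ∈ X.linkVerts α, ∑ y ∈ X.linkVerts (insert x α),
        X.linkPi α {x, y} / 2 * g x * g y
      ≤ ∑ x ∈ X.linkVerts α, ∑ y ∈ X.linkVerts (insert x α),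
        (X.linkPi α {x, y} / 2 * g x ^ 2 + X.linkPi α {y, x} / 2 * g y ^ 2) := by
    rw [Finset.mul_sum]
    refine Finset.sum_le_sum fun x hx => ?_
    rw [Finset.mul_sum]
    refine Finset.sum_le_sum fun y hy => ?_
    rw [Finset.pair_comm y x]
    nlinarith [X.linkPi_pair_pos hα hx hy, sq_nonneg (g x - g y)]
  simp only [Finset.sum_add_distrib] at hamgm
  rw [X.linkInner_linkWalk_eq_sum hα, hdiag]
  linarith

theorem linkInner_one_right (α : Finset V) (g : V → ℝ) :
    X.linkInner α g (fun _ => 1) = X.linkMean α g := by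
  simp only [linkInner, linkMean, mul_one]

theorem linkMean_add_const {α : Finset V} (hα : α ∈ X.faces) {m : ℕ} (hc : α.card = m)
    (hm : m ≤ d) (g : V → ℝ) (c : ℝ) :
    X.linkMean α (fun x => g x + c) = X.linkMean α g + c := by
  simp only [linkMean, mul_add, Finset.sum_add_distrib, ← Finset.sum_mul,
    X.sum_linkPi_singleton hα hc hm, one_mul]

theorem linkMean_linkWalk {α : Finset V} (hα : α ∈ X.faces) {m : ℕ} (hc : α.card = m)
    (hmd : m + 1 ≤ d) (g : V → ℝ) :
    X.linkMean α (X.linkWalk α g) = X.linkMean α g :=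
  calc X.linkMean α (X.linkWalk α g) = X.linkInner α (fun _ => 1) (X.linkWalk α g) := by
        simp only [linkMean, linkInner, mul_one]
    _ = X.linkInner α g (X.linkWalk α fun _ => 1) := X.linkInner_linkWalk_comm hα _ _
    _ = X.linkMean α g := Finset.sum_congr rfl fun x hx => by
        rw [X.linkWalk_const hα hc hmd 1 hx, mul_one]

theorem linkInner_add_const_self {α : Finset V} (hα : α ∈ X.faces) {m : ℕ} (hc : α.card = m)
    (hm : m ≤ d) (g : V → ℝ) (c : ℝ) :
    X.linkInner α (fun x => g x + c) (fun x => g x + c)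
      = X.linkInner α g g + 2 * c * X.linkMean α g + c ^ 2 := by
  rw [← mul_one (c ^ 2), ← X.sum_linkPi_singleton hα hc hm]
  simp only [linkInner, linkMean, Finset.mul_sum, ← Finset.sum_add_distrib]
  exact Finset.sum_congr rfl fun _ _ => by ring

theorem linkInner_linkWalk_add_const {α : Finset V} (hα : α ∈ X.faces) {m : ℕ}
    (hc : α.card = m) (hmd : m + 1 ≤ d) (g : V → ℝ) (c : ℝ) :
    X.linkInner α (fun x => g x + c) (X.linkWalk α fun x => g x + c)
      = X.linkInner α g (X.linkWalk α g) + 2 * c * X.linkMean α g + c ^ 2 := by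
  have hstat := X.linkMean_linkWalk hα hc hmd g
  rw [two_mul, add_mul, ← mul_one (c ^ 2), ← X.sum_linkPi_singleton hα hc (by omega)]
  nth_rewrite 2 [← hstat]
  simp only [linkInner, linkMean, Finset.mul_sum, ← Finset.sum_add_distrib]
  exact Finset.sum_congr rfl fun x hx => by rw [X.linkWalk_add_const hα hc hmd g c hx]; ring

theorem linkRayleigh_le_one {α : Finset V} (hα : α ∈ X.faces) {m : ℕ} (hc : α.card = m)
    (hmd : m + 1 ≤ d) (g : V → ℝ) :
    X.linkInner α g (X.linkWalk α g) / X.linkInner α g g ≤ 1 :=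
  div_le_one_of_le₀ (X.linkInner_linkWalk_self_le hα hc hmd g) (X.linkInner_self_nonneg hα g)

theorem linkRayleigh_le_linkLam2 {α : Finset V} (hα : α ∈ X.faces) {m : ℕ} (hc : α.card = m)
    (hmd : m + 1 ≤ d) {g : V → ℝ} (hg : X.linkMean α g = 0) (hgg : X.linkInner α g g ≠ 0) :
    X.linkInner α g (X.linkWalk α g) / X.linkInner α g g ≤ X.linkLam2 α :=
  le_csSup ⟨1, by rintro _ ⟨f, -, -, rfl⟩; exact X.linkRayleigh_le_one hα hc hmd f⟩
    ⟨g, by rwa [linkInner_one_right], hgg, rfl⟩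

theorem linkLam2_le_one {α : Finset V} (hα : α ∈ X.faces) {m : ℕ} (hc : α.card = m)
    (hmd : m + 1 ≤ d) : X.linkLam2 α ≤ 1 :=
  Real.sSup_le (by rintro _ ⟨f, -, -, rfl⟩; exact X.linkRayleigh_le_one hα hc hmd f) zero_le_one

theorem linkLam2_le_gammaC {α : Finset V} (hα : α ∈ X.faces) {m : ℕ} (hc : α.card = m)
    (hmd : m + 1 ≤ d) : X.linkLam2 α ≤ X.gammaC m :=
  le_csSup ⟨1, by rintro _ ⟨β, hβ, hβc, rfl⟩; exact X.linkLam2_le_one hβ hβc hmd⟩ ⟨α, hα, hc, rfl⟩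

theorem gammaC_le_one {m : ℕ} (hmd : m + 1 ≤ d) : X.gammaC m ≤ 1 :=
  Real.sSup_le (by rintro _ ⟨β, hβ, hβc, rfl⟩; exact X.linkLam2_le_one hβ hβc hmd) zero_le_one

theorem linkInner_linkWalk_le_linkLam2_mul {α : Finset V} (hα : α ∈ X.faces) {m : ℕ}
    (hc : α.card = m) (hmd : m + 1 ≤ d) {g : V → ℝ} (hg : X.linkMean α g = 0) :
    X.linkInner α g (X.linkWalk α g) ≤ X.linkLam2 α * X.linkInner α g g := by
  rcases (X.linkInner_self_nonneg hα g).eq_or_lt with h0 | hpos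
  · have hzero : ∀ x ∈ X.linkVerts α, g x = 0 := fun x hx => by
      have := (Finset.sum_eq_zero_iff_of_nonneg fun y hy => by
        rw [mul_assoc]
        exact mul_nonneg (X.linkPi_singleton_pos hα hy).le (mul_self_nonneg _)).1 h0.symm x hx
      simpa [mul_assoc, (X.linkPi_singleton_pos hα hx).ne'] using this
    rw [← h0, mul_zero]
    exact (Finset.sum_eq_zero fun x hx => by rw [hzero x hx, mul_zero, zero_mul]).le
  · have := X.linkRayleigh_le_linkLam2 hα hc hmd hg hpos.ne'
    rwa [div_le_iff₀ hpos] at this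

theorem linkInner_linkWalk_le_gammaC {α : Finset V} (hα : α ∈ X.faces) {m : ℕ} (hc : α.card = m)
    (hmd : m + 1 ≤ d) (g : V → ℝ) :
    X.linkInner α g (X.linkWalk α g)
      ≤ X.gammaC m * X.linkInner α g g + (1 - X.gammaC m) * X.linkMean α g ^ 2 := by
  set c := X.linkMean α g
  set g₀ : V → ℝ := fun x => g x - c
  have hg : (fun x => g₀ x + c) = g := funext fun x => sub_add_cancel (g x) c
  have hg₀ : X.linkMean α g₀ = 0 := by
    have := X.linkMean_add_const hα hc (by omega) g₀ c
    rw [hg] at this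
    linarith
  have hnorm := X.linkInner_add_const_self hα hc (by omega) g₀ c
  have hquad := X.linkInner_linkWalk_add_const hα hc hmd g₀ c
  rw [hg, hg₀] at hnorm hquad
  have h₀ := (X.linkInner_linkWalk_le_linkLam2_mul hα hc hmd hg₀).trans
    (mul_le_mul_of_nonneg_right (X.linkLam2_le_gammaC hα hc hmd) (X.linkInner_self_nonneg hα g₀))
  rw [hquad, hnorm]
  linarith

theorem exists_linkPi_singleton_le {α : Finset V} (hα : α ∈ X.faces) {m : ℕ} (hc : α.card = m)
    (hm : m ≤ d) (hne : (X.linkVerts α).Nonempty) :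
    ∃ x ∈ X.linkVerts α, X.linkPi α {x} ≤ 1 / ((X.linkVerts α).card : ℝ) := by
  refine Finset.exists_le_of_sum_le hne ?_
  rw [X.sum_linkPi_singleton hα hc hm, Finset.sum_const, nsmul_eq_mul,
    mul_one_div_cancel (by exact_mod_cast hne.card_pos.ne')]

/-- The test function `𝟙_{x₀} - w`, with `w = Π^α_0(x₀)`, has Rayleigh quotient `-w/(1-w)`. -/
theorem neg_div_one_sub_le_linkLam2 {α : Finset V} (hα : α ∈ X.faces) {m : ℕ}
    (hc : α.card = m) (hmd : m + 1 ≤ d) {x₀ : V} (hx₀ : x₀ ∈ X.linkVerts α)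
    (hw : X.linkPi α {x₀} < 1) :
    -(X.linkPi α {x₀} / (1 - X.linkPi α {x₀})) ≤ X.linkLam2 α := by
  set w := X.linkPi α {x₀}
  have hw₀ : 0 < w := X.linkPi_singleton_pos hα hx₀
  set e : V → ℝ := fun z => if z = x₀ then 1 else 0
  have hinner : ∀ h : V → ℝ, X.linkInner α e h = w * h x₀ := fun h => by
    simp only [linkInner, e, mul_ite, mul_one, mul_zero, ite_mul, zero_mul]
    rw [Finset.sum_ite_eq' _ _ _, if_pos hx₀]
  have hmean : X.linkMean α e = w := by rw [← linkInner_one_right, hinner, mul_one]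
  have hdiag : X.linkWalk α e x₀ = 0 := by
    rw [linkWalk_eq]
    refine Finset.sum_eq_zero fun y hy => ?_
    have : y ≠ x₀ := by rintro rfl; simp at hy
    simp [e, this]
  have hg : X.linkMean α (fun z => e z + -w) = 0 := by
    rw [X.linkMean_add_const hα hc (by omega), hmean, add_neg_cancel]
  have hnorm : X.linkInner α (fun z => e z + -w) (fun z => e z + -w) = w * (1 - w) := by
    rw [X.linkInner_add_const_self hα hc (by omega), hinner, hmean]
    simp only [e, if_pos]
    ring
  have hquad : X.linkInner α (fun z => e z + -w) (X.linkWalk α fun z => e z + -w) = -w ^ 2 := by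
    rw [X.linkInner_linkWalk_add_const hα hc hmd, hinner, hmean, hdiag]
    ring
  have := X.linkRayleigh_le_linkLam2 hα hc hmd hg
    (by rw [hnorm]; exact (mul_pos hw₀ (sub_pos.2 hw)).ne')
  rw [hquad, hnorm] at this
  convert this using 1
  field_simp

theorem exists_face_card_le_card_linkVerts {m : ℕ} (hm : m ≤ d) :
    ∃ α ∈ X.faces, α.card = m ∧ d + 1 - m ≤ (X.linkVerts α).card := by
  obtain ⟨T, hT, -, hTc⟩ := X.pure ∅ X.empty_mem
  obtain ⟨α, -, hαT, hαc⟩ :=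
    Finset.exists_subsuperset_card_eq (Finset.empty_subset T) (n := m) (by simp) (by omega)
  refine ⟨α, X.down_closed T hT α hαT, hαc, ?_⟩
  calc d + 1 - m = (T \ α).card := by rw [Finset.card_sdiff_of_subset hαT, hTc, hαc]
    _ ≤ (X.linkVerts α).card := Finset.card_le_card fun x hx => by
      rw [Finset.mem_sdiff] at hx
      exact X.mem_linkVerts.2 ⟨hx.2, X.down_closed T hT _ (Finset.insert_subset hx.1 hαT)⟩

theorem neg_inv_le_gammaC {m : ℕ} (hm : m < d) : -(1 / ((d : ℝ) - m)) ≤ X.gammaC m := by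
  obtain ⟨α, hα, hc, hn⟩ := X.exists_face_card_le_card_linkVerts hm.le
  obtain ⟨x₀, hx₀, hw⟩ := X.exists_linkPi_singleton_le hα hc hm.le
    (Finset.card_pos.1 (by omega))
  have hw₀ := X.linkPi_singleton_pos hα hx₀
  have hdm : (1 : ℝ) ≤ (d : ℝ) - m := by
    have : (m : ℝ) + 1 ≤ d := by exact_mod_cast hm
    linarith
  have hn' : (d : ℝ) - m + 1 ≤ (X.linkVerts α).card := by
    rw [← Nat.cast_sub hm.le]; exact_mod_cast (show d - m + 1 ≤ _ by omega)
  have hw' : X.linkPi α {x₀} * ((d : ℝ) - m + 1) ≤ 1 :=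
    calc X.linkPi α {x₀} * ((d : ℝ) - m + 1) ≤ X.linkPi α {x₀} * (X.linkVerts α).card := by
          gcongr
      _ ≤ 1 := (le_div_iff₀ (by linarith)).1 hw
  have hw1 : X.linkPi α {x₀} < 1 := by nlinarith
  calc -(1 / ((d : ℝ) - m)) ≤ -(X.linkPi α {x₀} / (1 - X.linkPi α {x₀})) := by
        rw [neg_le_neg_iff, div_le_div_iff₀ (by linarith) (by linarith)]
        linarith
    _ ≤ X.linkLam2 α := X.neg_div_one_sub_le_linkLam2 hα hc hm hx₀ hw1
    _ ≤ X.gammaC m := X.linkLam2_le_gammaC hα hc hm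

theorem prod_one_sub_gammaC_le {q s : ℕ} (hqs : q ≤ s) (hs : s ≤ d) :
    ∏ j ∈ Finset.Ico q s, (1 - X.gammaC j) ≤ ((d : ℝ) - q + 1) / ((d : ℝ) - s + 1) := by
  induction s, hqs using Nat.le_induction with
  | base =>
    have : (q : ℝ) ≤ d := by exact_mod_cast hs
    rw [Finset.Ico_self, Finset.prod_empty, div_self (by linarith)]
  | succ s hqs ih =>
    have hsd : (1 : ℝ) ≤ (d : ℝ) - s := by
      have : (s : ℝ) + 1 ≤ d := by exact_mod_cast hs
      linarith
    have hq : (q : ℝ) ≤ s := by exact_mod_cast hqs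
    have hfactor : 1 - X.gammaC s ≤ ((d : ℝ) - s + 1) / ((d : ℝ) - s) := by
      have := X.neg_inv_le_gammaC hs
      rw [add_div, div_self (by linarith)]
      linarith
    have hprod : 0 ≤ ∏ j ∈ Finset.Ico q s, (1 - X.gammaC j) :=
      Finset.prod_nonneg fun j hj => sub_nonneg.2 (X.gammaC_le_one (by simp at hj; omega))
    rw [Finset.prod_Ico_succ_top hqs]
    calc (∏ j ∈ Finset.Ico q s, (1 - X.gammaC j)) * (1 - X.gammaC s)
        ≤ ((d : ℝ) - q + 1) / ((d : ℝ) - s + 1) * (((d : ℝ) - s + 1) / ((d : ℝ) - s)) :=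
          mul_le_mul (ih (by omega)) hfactor (sub_nonneg.2 (X.gammaC_le_one hs))
            (div_nonneg (by linarith) (by linarith))
      _ = ((d : ℝ) - q + 1) / ((d : ℝ) - (s + 1 : ℕ) + 1) := by
          rw [div_mul_div_cancel₀ (by linarith)]
          push_cast
          ring_nf

theorem W_mul_linkPi_singleton {α : Finset V} (hα : α ∈ X.faces) {m : ℕ} (hc : α.card = m)
    {x : V} (hx : x ∉ α) :
    X.W m α * X.linkPi α {x} = X.W (m + 1) (insert x α) / ((m : ℝ) + 1) := by
  have := (X.W_pos hα hc).ne'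
  rw [X.linkPi_singleton hx hc]
  field_simp

/-- Drawing `α ∼ Π` and then `x ∼ Π^α_0` gives the same distribution on flags
`α ⊂ insert x α` as drawing `insert x α ∼ Π` and then `x` uniformly from it. -/
theorem sum_W_mul_linkPi (m : ℕ) (H : Finset V → V → ℝ) :
    ∑ α ∈ X.faces.filter (fun a => a.card = m), ∑ x ∈ X.linkVerts α,
        X.W m α * X.linkPi α {x} * H (insert x α) x
      = ∑ a ∈ X.faces.filter (fun a => a.card = m + 1), ∑ x ∈ a,
          X.W (m + 1) a / ((m : ℝ) + 1) * H a x := by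
  rw [← X.sum_faces_sum_linkVerts]
  refine Finset.sum_congr rfl fun α hα => Finset.sum_congr rfl fun x hx => ?_
  obtain ⟨hα, hc⟩ := Finset.mem_filter.1 hα
  rw [X.W_mul_linkPi_singleton hα hc (X.mem_linkVerts.1 hx).1]

theorem downOp_eq_linkMean {α : Finset V} {m : ℕ} (hc : α.card = m) (f : Finset V → ℝ) :
    X.downOp f α = X.linkMean α (fun x => f (insert x α)) := by
  rw [downOp, linkMean, ← X.sum_linkVerts_insert α fun β =>
    X.W (α.card + 1) β * f β / (((α.card : ℝ) + 1) * X.W α.card α)]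
  refine Finset.sum_congr rfl fun x hx => ?_
  rw [X.linkPi_singleton (X.mem_linkVerts.1 hx).1 hc, hc]
  ring

theorem inn_upOp_left (s : ℕ) (f g : Finset V → ℝ) :
    X.inn (s + 1) (upOp f) g = X.inn s f (X.downOp g) := by
  calc X.inn (s + 1) (upOp f) g
      = ∑ a ∈ X.faces.filter (fun a => a.card = s + 1), ∑ x ∈ a,
          X.W (s + 1) a / ((s : ℝ) + 1) * (f (a.erase x) * g a) := by
        refine Finset.sum_congr rfl fun a ha => ?_
        rw [upOp, (Finset.mem_filter.1 ha).2, Finset.mul_sum, Finset.mul_sum, Finset.sum_mul]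
        push_cast
        exact Finset.sum_congr rfl fun _ _ => by ring
    _ = ∑ α ∈ X.faces.filter (fun a => a.card = s), ∑ x ∈ X.linkVerts α,
          X.W s α * X.linkPi α {x} * (f ((insert x α).erase x) * g (insert x α)) :=
        (X.sum_W_mul_linkPi s fun a x => f (a.erase x) * g a).symm
    _ = X.inn s f (X.downOp g) := by
        refine Finset.sum_congr rfl fun α hα => ?_
        rw [X.downOp_eq_linkMean (Finset.mem_filter.1 hα).2, linkMean, Finset.mul_sum]
        refine Finset.sum_congr rfl fun x hx => ?_
        rw [Finset.erase_insert (X.mem_linkVerts.1 hx).1]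
        ring

theorem sum_W_mul_linkInner_self (m : ℕ) (f : Finset V → ℝ) :
    ∑ α ∈ X.faces.filter (fun a => a.card = m),
        X.W m α * X.linkInner α (fun x => f (insert x α)) (fun x => f (insert x α))
      = X.inn (m + 1) f f := by
  calc ∑ α ∈ X.faces.filter (fun a => a.card = m),
        X.W m α * X.linkInner α (fun x => f (insert x α)) (fun x => f (insert x α))
      = ∑ α ∈ X.faces.filter (fun a => a.card = m), ∑ x ∈ X.linkVerts α,
          X.W m α * X.linkPi α {x} * (f (insert x α) * f (insert x α)) :=
        Finset.sum_congr rfl fun α _ => by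
          rw [linkInner, Finset.mul_sum]
          exact Finset.sum_congr rfl fun _ _ => by ring
    _ = ∑ a ∈ X.faces.filter (fun a => a.card = m + 1), ∑ x ∈ a,
          X.W (m + 1) a / ((m : ℝ) + 1) * (f a * f a) :=
        X.sum_W_mul_linkPi m fun a _ => f a * f a
    _ = X.inn (m + 1) f f := Finset.sum_congr rfl fun a ha => by
        rw [Finset.sum_const, (Finset.mem_filter.1 ha).2, nsmul_eq_mul]
        push_cast
        field_simp

theorem W_mul_linkInner_linkWalk {α : Finset V} (hα : α ∈ X.faces) {m : ℕ} (hc : α.card = m)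
    (f : Finset V → ℝ) :
    X.W m α * X.linkInner α (fun x => f (insert x α)) (X.linkWalk α fun x => f (insert x α))
      = ∑ x ∈ X.linkVerts α, ∑ y ∈ X.linkVerts (insert x α),
          X.W (m + 2) (insert y (insert x α)) / (((m : ℝ) + 2) * ((m : ℝ) + 1)) *
            (f (insert x α) * f (insert y α)) := by
  have := (X.W_pos hα hc).ne'
  rw [X.linkInner_linkWalk_eq_sum hα, Finset.mul_sum]
  refine Finset.sum_congr rfl fun x hx => ?_
  rw [Finset.mul_sum]
  refine Finset.sum_congr rfl fun y hy => ?_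
  rw [mem_linkVerts] at hx hy
  rw [mul_assoc, X.linkPi_pair hx.1 hy.1 hc]
  field_simp

theorem sum_W_mul_linkInner_linkWalk (m : ℕ) (f : Finset V → ℝ) :
    ∑ α ∈ X.faces.filter (fun a => a.card = m),
        X.W m α * X.linkInner α (fun x => f (insert x α)) (X.linkWalk α fun x => f (insert x α))
      = ∑ β ∈ X.faces.filter (fun b => b.card = m + 2), ∑ x ∈ β, ∑ y ∈ β.erase x,
          X.W (m + 2) β / (((m : ℝ) + 2) * ((m : ℝ) + 1)) * (f (β.erase x) * f (β.erase y)) := by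
  set c : ℝ := ((m : ℝ) + 2) * ((m : ℝ) + 1)
  calc ∑ α ∈ X.faces.filter (fun a => a.card = m),
        X.W m α * X.linkInner α (fun x => f (insert x α)) (X.linkWalk α fun x => f (insert x α))
      = ∑ α ∈ X.faces.filter (fun a => a.card = m), ∑ x ∈ X.linkVerts α,
          ∑ y ∈ X.linkVerts (insert x α), X.W (m + 2) (insert y (insert x α)) / c *
            (f (insert x α) * f (insert y ((insert x α).erase x))) := by
        refine Finset.sum_congr rfl fun α hα => ?_
        obtain ⟨hα, hc⟩ := Finset.mem_filter.1 hα
        rw [X.W_mul_linkInner_linkWalk hα hc]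
        refine Finset.sum_congr rfl fun x hx => ?_
        rw [Finset.erase_insert (X.mem_linkVerts.1 hx).1]
    _ = ∑ a ∈ X.faces.filter (fun a => a.card = m + 1), ∑ x ∈ a, ∑ y ∈ X.linkVerts a,
          X.W (m + 2) (insert y a) / c * (f a * f (insert y (a.erase x))) :=
        X.sum_faces_sum_linkVerts m fun a x => ∑ y ∈ X.linkVerts a,
          X.W (m + 2) (insert y a) / c * (f a * f (insert y (a.erase x)))
    _ = ∑ a ∈ X.faces.filter (fun a => a.card = m + 1), ∑ y ∈ X.linkVerts a,
          ∑ x ∈ (insert y a).erase y, X.W (m + 2) (insert y a) / c *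
            (f ((insert y a).erase y) * f ((insert y a).erase x)) := by
        refine Finset.sum_congr rfl fun a _ => ?_
        rw [Finset.sum_comm]
        refine Finset.sum_congr rfl fun y hy => ?_
        have hya := (X.mem_linkVerts.1 hy).1
        rw [Finset.erase_insert hya]
        refine Finset.sum_congr rfl fun x hx => ?_
        rw [Finset.erase_insert_of_ne (show y ≠ x by rintro rfl; exact hya hx)]
    _ = _ := X.sum_faces_sum_linkVerts (m + 1) fun β y => ∑ x ∈ β.erase y,
          X.W (m + 2) β / c * (f (β.erase y) * f (β.erase x))

theorem inn_self_eq_sum_facets {m : ℕ} (hmd : m + 1 ≤ d) (f : Finset V → ℝ) :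
    X.inn (m + 1) f f = ∑ β ∈ X.faces.filter (fun b => b.card = m + 2), ∑ x ∈ β,
      X.W (m + 2) β / ((m : ℝ) + 2) * (f (β.erase x) * f (β.erase x)) := by
  have h := (X.sum_W_mul_linkPi (m + 1) fun β x => f (β.erase x) * f (β.erase x)).symm
  push_cast at h
  rw [show (m : ℝ) + 2 = m + 1 + 1 by ring, h]
  refine Finset.sum_congr rfl fun a ha => ?_
  obtain ⟨ha, hc⟩ := Finset.mem_filter.1 ha
  calc X.W (m + 1) a * f a * f a
      = (∑ x ∈ X.linkVerts a, X.linkPi a {x}) * (X.W (m + 1) a * f a * f a) := by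
        rw [X.sum_linkPi_singleton ha hc hmd, one_mul]
    _ = _ := by
        rw [Finset.sum_mul]
        refine Finset.sum_congr rfl fun x hx => ?_
        rw [Finset.erase_insert (X.mem_linkVerts.1 hx).1]
        ring

theorem inn_upOp_self_eq {m : ℕ} (hmd : m + 1 ≤ d) (f : Finset V → ℝ) :
    X.inn (m + 2) (upOp f) (upOp f)
      = 1 / ((m : ℝ) + 2) * X.inn (m + 1) f f + ((m : ℝ) + 1) / ((m : ℝ) + 2) *
          ∑ α ∈ X.faces.filter (fun a => a.card = m), X.W m α *
            X.linkInner α (fun x => f (insert x α)) (X.linkWalk α fun x => f (insert x α)) := by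
  have hsq : ∀ β ∈ X.faces.filter (fun b => b.card = m + 2),
      X.W (m + 2) β * upOp f β * upOp f β
        = 1 / ((m : ℝ) + 2) * ∑ x ∈ β,
            X.W (m + 2) β / ((m : ℝ) + 2) * (f (β.erase x) * f (β.erase x))
          + ((m : ℝ) + 1) / ((m : ℝ) + 2) * ∑ x ∈ β, ∑ y ∈ β.erase x,
            X.W (m + 2) β / (((m : ℝ) + 2) * ((m : ℝ) + 1)) * (f (β.erase x) * f (β.erase y)) := by
    intro β hβ
    have hsplit : (∑ x ∈ β, f (β.erase x)) * (∑ x ∈ β, f (β.erase x))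
        = ∑ x ∈ β, f (β.erase x) * f (β.erase x)
          + ∑ x ∈ β, ∑ y ∈ β.erase x, f (β.erase x) * f (β.erase y) := by
      rw [Finset.sum_mul_sum, ← Finset.sum_add_distrib]
      exact Finset.sum_congr rfl fun x hx => (Finset.add_sum_erase _ _ hx).symm
    rw [← Finset.mul_sum, Finset.sum_congr rfl fun x _ => (Finset.mul_sum _ _ _).symm,
      ← Finset.mul_sum, eq_sub_of_add_eq' hsplit.symm, upOp, (Finset.mem_filter.1 hβ).2]
    push_cast
    field_simp
    ring
  rw [inn, Finset.sum_congr rfl hsq, Finset.sum_add_distrib, ← Finset.mul_sum, ← Finset.mul_sum,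
    ← X.inn_self_eq_sum_facets hmd, X.sum_W_mul_linkInner_linkWalk]

noncomputable def upNormBound (q s : ℕ) : ℝ :=
  1 - 1 / ((s : ℝ) + 1) * ∏ j ∈ Finset.Ico q s, (1 - X.gammaC j)

theorem upNormBound_nonneg {q s : ℕ} (hqs : q ≤ s) (hs : s ≤ d) : 0 ≤ X.upNormBound q s := by
  have hprod := X.prod_one_sub_gammaC_le hqs hs
  have hq : (0 : ℝ) ≤ q := q.cast_nonneg
  have hs' : (s : ℝ) ≤ d := by exact_mod_cast hs
  have hratio : ((d : ℝ) - q + 1) / ((d : ℝ) - s + 1) ≤ (s : ℝ) + 1 := by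
    rw [div_le_iff₀ (by linarith)]
    nlinarith [mul_nonneg (s.cast_nonneg : (0 : ℝ) ≤ s) (sub_nonneg.2 hs')]
  rw [upNormBound, sub_nonneg, one_div_mul_eq_div, div_le_one (by positivity)]
  exact hprod.trans hratio

theorem upNormBound_succ (q s : ℕ) (hqs : q ≤ s) :
    X.upNormBound q (s + 1) = 1 / ((s : ℝ) + 2) + ((s : ℝ) + 1) / ((s : ℝ) + 2) *
      (X.gammaC s + (1 - X.gammaC s) * X.upNormBound q s) := by
  rw [upNormBound, upNormBound, Finset.prod_Ico_succ_top hqs]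
  push_cast
  field_simp
  ring

theorem inn_upOp_self_le {m : ℕ} (hmd : m + 1 ≤ d) (f : Finset V → ℝ) :
    X.inn (m + 2) (upOp f) (upOp f)
      ≤ 1 / ((m : ℝ) + 2) * X.inn (m + 1) f f + ((m : ℝ) + 1) / ((m : ℝ) + 2) *
          (X.gammaC m * X.inn (m + 1) f f
            + (1 - X.gammaC m) * X.inn m (X.downOp f) (X.downOp f)) := by
  have hlinks : ∑ α ∈ X.faces.filter (fun a => a.card = m), X.W m α *
        X.linkInner α (fun x => f (insert x α)) (X.linkWalk α fun x => f (insert x α))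
      ≤ X.gammaC m * X.inn (m + 1) f f
          + (1 - X.gammaC m) * X.inn m (X.downOp f) (X.downOp f) := by
    rw [← X.sum_W_mul_linkInner_self, inn, Finset.mul_sum, Finset.mul_sum,
      ← Finset.sum_add_distrib]
    refine Finset.sum_le_sum fun α hα => ?_
    obtain ⟨hα, hc⟩ := Finset.mem_filter.1 hα
    rw [X.downOp_eq_linkMean hc]
    nlinarith [mul_le_mul_of_nonneg_left (X.linkInner_linkWalk_le_gammaC hα hc hmd
      fun x => f (insert x α)) (X.W_pos hα hc).le]
  rw [X.inn_upOp_self_eq hmd]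
  gcongr

theorem inn_downOp_self_le {s : ℕ} {θ : ℝ} (hθ : 0 ≤ θ) {f : Finset V → ℝ}
    (h : X.inn (s + 1) (upOp (X.downOp f)) (upOp (X.downOp f))
      ≤ θ * X.inn s (X.downOp f) (X.downOp f)) :
    X.inn s (X.downOp f) (X.downOp f) ≤ θ * X.inn (s + 1) f f := by
  have hf := X.inn_self_nonneg (s + 1) f
  have hsq : X.inn s (X.downOp f) (X.downOp f) ^ 2
      ≤ θ * X.inn s (X.downOp f) (X.downOp f) * X.inn (s + 1) f f :=
    calc X.inn s (X.downOp f) (X.downOp f) ^ 2 = X.inn (s + 1) (upOp (X.downOp f)) f ^ 2 := by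
          rw [inn_upOp_left, inn_comm]
      _ ≤ _ := (X.inn_sq_le _ _ _).trans (mul_le_mul_of_nonneg_right h hf)
  rcases (X.inn_self_nonneg s (X.downOp f)).eq_or_lt with h0 | hpos
  · rw [← h0]
    positivity
  · nlinarith

theorem inn_upOp_self_le_upNormBound {q s : ℕ} (hqs : q ≤ s) (hs : s ≤ d)
    {f : Finset V → ℝ} (hf : ∀ α ∈ X.faces, α.card = q → X.downOp^[s - q] f α = 0) :
    X.inn (s + 1) (upOp f) (upOp f) ≤ X.upNormBound q s * X.inn s f f := by
  induction s, hqs using Nat.le_induction generalizing f with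
  | base =>
    simp only [Nat.sub_self, Function.iterate_zero, id] at hf
    rw [inn_upOp_left, X.inn_eq_zero_of_left hf, X.inn_eq_zero_of_left hf, mul_zero]
  | succ s hqs ih =>
    rw [show s + 1 - q = s - q + 1 by omega, Function.iterate_succ_apply] at hf
    have hDf := X.inn_downOp_self_le (X.upNormBound_nonneg hqs (by omega)) (ih (by omega) hf)
    have hγ := X.gammaC_le_one hs
    calc X.inn (s + 2) (upOp f) (upOp f) ≤ _ := X.inn_upOp_self_le hs f
      _ ≤ _ := by
        rw [X.upNormBound_succ q s hqs]
        have hc : 0 ≤ ((s : ℝ) + 1) / ((s : ℝ) + 2) * (1 - X.gammaC s) :=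
          mul_nonneg (by positivity) (by linarith)
        linarith [mul_le_mul_of_nonneg_left hDf hc]

noncomputable def upOpLin : (Finset V → ℝ) →ₗ[ℝ] Finset V → ℝ where
  toFun := upOp
  map_add' f g := by
    ext β
    simp only [upOp, Pi.add_apply, Finset.sum_add_distrib, mul_add]
  map_smul' c f := by
    ext β
    simp only [upOp, Pi.smul_apply, smul_eq_mul, RingHom.id_apply, ← Finset.mul_sum]
    ring

noncomputable def downOpLin : (Finset V → ℝ) →ₗ[ℝ] Finset V → ℝ where
  toFun := X.downOp
  map_add' f g := by
    ext α
    simp only [downOp, Pi.add_apply, mul_add, add_div, Finset.sum_add_distrib]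
  map_smul' c f := by
    ext α
    simp only [downOp, Pi.smul_apply, smul_eq_mul, RingHom.id_apply, Finset.mul_sum]
    exact Finset.sum_congr rfl fun _ _ => by ring

theorem iterate_downOp_sum_smul {ι : Type*} (t : ℕ) (s : Finset ι) (c : ι → ℝ)
    (f : ι → Finset V → ℝ) :
    X.downOp^[t] (∑ i ∈ s, c i • f i) = ∑ i ∈ s, c i • X.downOp^[t] (f i) := by
  have h := map_sum (X.downOpLin ^ t) (fun i => c i • f i) s
  simp only [map_smul, Module.End.coe_pow] at h
  exact h

theorem upDown_sum_smul {ι : Type*} (s : Finset ι) (c : ι → ℝ) (f : ι → Finset V → ℝ) :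
    X.upDown (∑ i ∈ s, c i • f i) = ∑ i ∈ s, c i • X.upDown (f i) := by
  have h := map_sum (X.downOpLin ∘ₗ upOpLin) (fun i => c i • f i) s
  simp only [map_smul] at h
  exact h

theorem exists_ne_zero_iterate_downOp_sum_eq_zero {ι : Type*} [Fintype ι] (t r : ℕ)
    (f : ι → Finset V → ℝ) (hcard : (X.faces.filter (fun α => α.card = r)).card < Fintype.card ι) :
    ∃ c : ι → ℝ, c ≠ 0 ∧
      ∀ α ∈ X.faces, α.card = r → X.downOp^[t] (∑ i, c i • f i) α = 0 := by
  have hdep : ¬ LinearIndependent ℝ fun i (a : X.faces.filter (fun α => α.card = r)) =>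
      X.downOp^[t] (f i) a := fun hli => by
    have := hli.fintype_card_le_finrank
    rw [Module.finrank_fintype_fun_eq_card, Fintype.card_coe] at this
    omega
  obtain ⟨c, hc, i, hi⟩ := Fintype.not_linearIndependent_iff.1 hdep
  refine ⟨c, fun h => hi (by rw [h, Pi.zero_apply]), fun α hα hαr => ?_⟩
  have := congrFun hc ⟨α, Finset.mem_filter.2 ⟨hα, hαr⟩⟩
  simpa [X.iterate_downOp_sum_smul] using this

theorem inn_sum_smul_of_orthogonal {ι : Type*} [Fintype ι] {m : ℕ} {f : ι → Finset V → ℝ}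
    (horth : ∀ i j, i ≠ j → X.inn m (f i) (f j) = 0) (c : ι → ℝ) (i : ι) :
    X.inn m (∑ j, c j • f j) (f i) = c i * X.inn m (f i) (f i) := by
  rw [inn_sum_smul_left, Finset.sum_eq_single i (fun j _ hji => by rw [horth j i hji, mul_zero])
    (by simp)]

theorem mul_inn_lt_inn_upDown_of_eigen {ι : Type*} [Fintype ι] {m : ℕ} {f : ι → Finset V → ℝ}
    {μ : ι → ℝ} {θ : ℝ} (heig : ∀ i, ∀ α ∈ X.faces, α.card = m → X.upDown (f i) α = μ i * f i α)
    (hnz : ∀ i, X.inn m (f i) (f i) ≠ 0) (horth : ∀ i j, i ≠ j → X.inn m (f i) (f j) = 0)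
    (hμ : ∀ i, θ < μ i) {c : ι → ℝ} (hc : c ≠ 0) :
    θ * X.inn m (∑ i, c i • f i) (∑ i, c i • f i)
      < X.inn m (∑ i, c i • f i) (X.upDown (∑ i, c i • f i)) := by
  set g := ∑ i, c i • f i
  have hnorm : X.inn m g g = ∑ i, c i * (c i * X.inn m (f i) (f i)) := by
    rw [inn_sum_smul_left]
    exact Finset.sum_congr rfl fun i _ => by rw [inn_comm, X.inn_sum_smul_of_orthogonal horth]
  have hquad : X.inn m g (X.upDown g) = ∑ i, c i * (μ i * (c i * X.inn m (f i) (f i))) := by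
    rw [upDown_sum_smul, inn_comm, inn_sum_smul_left]
    refine Finset.sum_congr rfl fun i _ => ?_
    rw [inn_comm, X.inn_congr_right g (heig i), ← X.inn_sum_smul_of_orthogonal horth c i]
    simp only [inn, Finset.mul_sum]
    exact Finset.sum_congr rfl fun _ _ => by ring
  have hpos : ∀ j, 0 < X.inn m (f j) (f j) := fun j =>
    (X.inn_self_nonneg m (f j)).lt_of_ne' (hnz j)
  obtain ⟨i, hi⟩ := Function.ne_iff.1 hc
  rw [hnorm, hquad, Finset.mul_sum]
  refine Finset.sum_lt_sum (fun j _ => ?_) ⟨i, Finset.mem_univ i, ?_⟩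
  · have : 0 ≤ c j * c j * X.inn m (f j) (f j) := mul_nonneg (mul_self_nonneg _) (hpos j).le
    nlinarith [mul_le_mul_of_nonneg_right (hμ j).le this]
  · have : 0 < c i * c i * X.inn m (f i) (f i) := mul_pos (mul_self_pos.2 hi) (hpos i)
    nlinarith [mul_lt_mul_of_pos_right (hμ i) this]

end WSC

/-- **Theorem (general form).** Let `(X, Π)` be a weighted pure `d`-dimensional
simplicial complex, `0 ≤ k ≤ d-1` and `-1 ≤ r-1 ≤ k` (so `r` is the cardinality,
`0 ≤ r ≤ k+1`).  Then the up-down walk `P∧_k` has at most `|X(r-1)|` eigenvalues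
(with multiplicity) strictly greater than `1 - (1/(k+2)) ∏_{j=r-1}^{k-1} (1-γ_j)`:
equivalently (by self-adjointness of `P∧_k` with respect to the positive-definite
inner product `⟨·,·⟩_{Π_k}`), there is no family of `|X(r-1)| + 1` pairwise
`Π_k`-orthogonal functions of nonzero `Π_k`-norm, each of which is an eigenfunction
of `P∧_k` on `X(k)` with eigenvalue strictly greater than that threshold. -/
theorem upDown_eigenvalue_count {V : Type*} [DecidableEq V] [Fintype V] {d : ℕ}
    (X : WSC V d) (k : ℕ) (hk : k < d) (r : ℕ) (hr : r ≤ k + 1) :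
    ¬ ∃ (f : Fin ((X.faces.filter (fun α => α.card = r)).card + 1) → Finset V → ℝ)
        (μ : Fin ((X.faces.filter (fun α => α.card = r)).card + 1) → ℝ),
      (∀ i, ∀ α ∈ X.faces, α.card = k + 1 → X.upDown (f i) α = μ i * f i α) ∧
      (∀ i, X.inn (k + 1) (f i) (f i) ≠ 0) ∧
      (∀ i j, i ≠ j → X.inn (k + 1) (f i) (f j) = 0) ∧
      (∀ i, 1 - (1 / ((k : ℝ) + 2)) * ∏ m ∈ Finset.Ico r (k + 1), (1 - X.gammaC m)
        < μ i) := by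
  rintro ⟨f, μ, heig, hnz, horth, hμ⟩
  obtain ⟨c, hc, hker⟩ := X.exists_ne_zero_iterate_downOp_sum_eq_zero (k + 1 - r) r f (by simp)
  have hup := X.inn_upOp_self_le_upNormBound hr hk hker
  rw [X.inn_upOp_left] at hup
  have hθ : X.upNormBound r (k + 1)
      = 1 - (1 / ((k : ℝ) + 2)) * ∏ m ∈ Finset.Ico r (k + 1), (1 - X.gammaC m) := by
    rw [WSC.upNormBound]
    push_cast
    ring_nf
  exact (X.mul_inn_lt_inn_upDown_of_eigen heig hnz horth (fun i => hθ ▸ hμ i) hc).not_ge hup
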